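/- For every z ∈ ℂ, the doubly infinite series ∑_{n=−∞}^{∞} J_n(z) converges and equals 1. -/

import Mathlib

/-- Bessel function of the first kind of nonnegative integer order `n`:
`J_n(z) = ∑_{k=0}^∞ (-1)^k (z/2)^(2k+n) / (k! (k+n)!)`. -/
noncomputable def besselJNat (n : ℕ) (z : ℂ) : ℂ :=
  ∑' k : ℕ, (-1) ^ k * (z / 2) ^ (2 * k + n) / (k.factorial * (k + n).factorial)

/-- Bessel function of the first kind of integer order, with
`J_{-n}(z) = (-1)^n J_n(z)` for `n ≥ 0`. -/
noncomputable def besselJ (n : ℤ) (z : ℂ) : ℂ :=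
  if 0 ≤ n then besselJNat n.toNat z else (-1) ^ (-n).toNat * besselJNat (-n).toNat z


/-!
Evaluate the generating function `exp ((z/2)(t - 1/t)) = ∑ₙ Jₙ(z) tⁿ` at `t = 1`: the product
`exp (-z/2) * exp (z/2) = 1` expands into an absolutely convergent double series over `ℕ × ℕ`,
and grouping its terms `(a, b)` by `b - a = n` recovers exactly the series of `Jₙ(z)`.
-/

open Nat NormedSpace

theorem hasSum_pow_div_factorial_mul_pow_div_factorial {𝔸 : Type*} [NormedField 𝔸]
    [NormedAlgebra ℚ 𝔸] [CompleteSpace 𝔸] (x y : 𝔸) :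
    HasSum (fun p : ℕ × ℕ => x ^ p.1 / p.1 ! * (y ^ p.2 / p.2 !)) (exp (x + y)) := by
  -- naming the factors spares the unifier the higher-order problem `?f p.1 * ?g p.2`
  let f (n : ℕ) : 𝔸 := x ^ n / (n !)
  let g (n : ℕ) : 𝔸 := y ^ n / (n !)
  rw [exp_add]
  exact HasSum.mul (f := f) (g := g) (expSeries_div_hasSum_exp x) (expSeries_div_hasSum_exp y)
    (summable_mul_of_summable_norm (f := f) (g := g) (norm_expSeries_div_summable x)
      (norm_expSeries_div_summable y))

def diffMinEquiv : ℕ × ℕ ≃ Σ _ : ℤ, ℕ where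
  toFun q := ⟨(q.2 : ℤ) - q.1, min q.1 q.2⟩
  invFun p := (p.2 + (-p.1).toNat, p.2 + p.1.toNat)
  left_inv q := by simp only [Prod.ext_iff]; omega
  right_inv p := by simp only [Sigma.ext_iff, heq_eq_eq]; omega

@[simp]
theorem diffMinEquiv_symm_natCast (t k : ℕ) : diffMinEquiv.symm ⟨t, k⟩ = (k, k + t) := by
  simp [diffMinEquiv]

@[simp]
theorem diffMinEquiv_symm_neg_natCast (t k : ℕ) :
    diffMinEquiv.symm ⟨-t, k⟩ = (k + t, k) := by
  simp [diffMinEquiv]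

theorem besselJ_natCast (t : ℕ) (z : ℂ) : besselJ t z = besselJNat t z := by
  simp [besselJ]

theorem besselJ_neg_natCast (t : ℕ) (z : ℂ) : besselJ (-t) z = (-1) ^ t * besselJNat t z := by
  rcases t.eq_zero_or_pos with rfl | ht
  · simp [besselJ]
  · rw [besselJ, if_neg (by omega)]
    simp

noncomputable def besselProductTerm (z : ℂ) (p : ℕ × ℕ) : ℂ :=
  (-(z / 2)) ^ p.1 / p.1 ! * ((z / 2) ^ p.2 / p.2 !)

theorem hasSum_besselProductTerm (z : ℂ) : HasSum (besselProductTerm z) 1 := by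
  have h := hasSum_pow_div_factorial_mul_pow_div_factorial (-(z / 2)) (z / 2)
  rwa [neg_add_cancel, exp_zero] at h

theorem besselProductTerm_of_le (z : ℂ) (t k : ℕ) :
    besselProductTerm z (k, k + t) =
      (-1) ^ k * (z / 2) ^ (2 * k + t) / (k ! * (k + t) !) := by
  rw [besselProductTerm, neg_pow]
  ring

theorem besselProductTerm_of_ge (z : ℂ) (t k : ℕ) :
    besselProductTerm z (k + t, k) =
      (-1) ^ t * ((-1) ^ k * (z / 2) ^ (2 * k + t) / (k ! * (k + t) !)) := by
  rw [besselProductTerm, neg_pow]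
  ring

theorem tsum_besselProductTerm_diffMinEquiv_symm (z : ℂ) (n : ℤ) :
    ∑' k : ℕ, besselProductTerm z (diffMinEquiv.symm ⟨n, k⟩) = besselJ n z := by
  obtain ⟨t, rfl | rfl⟩ := n.eq_nat_or_neg
  · simp only [diffMinEquiv_symm_natCast, besselProductTerm_of_le, besselJ_natCast, besselJNat]
  · simp only [diffMinEquiv_symm_neg_natCast, besselProductTerm_of_ge, tsum_mul_left,
      besselJ_neg_natCast, besselJNat]

theorem besselJ_sum_eq_one (z : ℂ) :
    HasSum (fun n : ℤ => besselJ n z) 1 := by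
  have hsigma := diffMinEquiv.symm.hasSum_iff.mpr (hasSum_besselProductTerm z)
  refine hsigma.sigma fun n => ?_
  rw [← tsum_besselProductTerm_diffMinEquiv_symm]
  exact (hsigma.summable.sigma_factor n).hasSum
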